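/- Let x ∈ ℝ^N be k-sparse with support T0, |T0| = k, and let T̃ ⊆ {1,…,N} with |T̃| = ρk and |T̃ ∩ T0| = αρk. Suppose T̃ᶜ ∩ T0ᶜ contains no support of x (automatic since supp(x) = T0). Let A be an n×N real matrix with y = Ax (noise-free measurements), and suppose there exists a real a with ak an integer, a ≥ (1−α)ρ, a > 1, such that δ_{ak} + (a/γ²)·δ_{(a+1)k} < a/γ² − 1, where γ = ω + (1−ω)·√(1+ρ−2αρ) for some 0 ≤ ω ≤ 1. Then any x* with Ax* = y and ‖x*‖_{1,w} ≤ ‖x‖_{1,w} (with weights w_i = ω for i ∈ T̃, w_i = 1 otherwise) satisfies x* = x; i.e., weighted ℓ1 minimization recovers x exactly. -/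

import Mathlib

open scoped BigOperators

noncomputable section

/-- The ℓ1 norm of a finite real vector. -/
def l1norm {ι : Type*} [Fintype ι] (v : ι → ℝ) : ℝ := ∑ i, |v i|

/-- The Euclidean (ℓ2) norm of a finite real vector. -/
def l2norm {ι : Type*} [Fintype ι] (v : ι → ℝ) : ℝ := Real.sqrt (∑ i, (v i) ^ 2)

/-- The ℓ∞ norm of a finite real vector. -/
def linfnorm {ι : Type*} [Fintype ι] (v : ι → ℝ) : ℝ := ⨆ i, |v i|

/-- The weighted ℓ1 norm `‖v‖_{1,w} = ∑ i, w i * |v i|`. -/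
def wl1norm {ι : Type*} [Fintype ι] (w v : ι → ℝ) : ℝ := ∑ i, w i * |v i|

/-- `restrict v S` is the vector equal to `v` on `S` and zero outside `S`. -/
def restrict {ι : Type*} [DecidableEq ι] (v : ι → ℝ) (S : Finset ι) : ι → ℝ :=
  fun i => if i ∈ S then v i else 0

/-- A vector is `m`-sparse if it has at most `m` nonzero entries. -/
def IsSparse {ι : Type*} [Fintype ι] (m : ℕ) (v : ι → ℝ) : Prop :=
  (Finset.univ.filter (fun i => v i ≠ 0)).card ≤ m

/-- The restricted isometry constant `δ_m` of a matrix `A`: the smallest `δ ≥ 0` such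
that `(1-δ)‖u‖₂² ≤ ‖Au‖₂² ≤ (1+δ)‖u‖₂²` for every `m`-sparse vector `u`. -/
def ripConst {n N : ℕ} (A : Matrix (Fin n) (Fin N) ℝ) (m : ℕ) : ℝ :=
  sInf {δ : ℝ | 0 ≤ δ ∧ ∀ u : Fin N → ℝ, IsSparse m u →
    (1 - δ) * (∑ i, (u i) ^ 2) ≤ (∑ j, (A.mulVec u j) ^ 2) ∧
    (∑ j, (A.mulVec u j) ^ 2) ≤ (1 + δ) * (∑ i, (u i) ^ 2)}

end

/-
Put `h = x* - x`, so that `A h = 0`. Since `x*` is no worse than `x` in the weighted ℓ1 norm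
and `x` lives on `T0`, the tail of `h` satisfies the cone bound
`‖h_{T0ᶜ}‖₁ ≤ ω ‖h_{T0}‖₁ + (1 - ω) ‖h_{T̃ ∆ T0}‖₁ ≤ γ √k ‖h_{T0 ∪ T1}‖₂`,
where `T1` carries the `ak` largest entries of `h` off `T0`; it dominates `T̃ \ T0` because
`|T̃ \ T0| = (1 - α) ρ k ≤ ak`. Cutting the rest of `T0ᶜ` into blocks of `ak` entries of
decreasing size, the RIP gives
`(1 - δ_{(a+1)k}) ‖h_{T0 ∪ T1}‖₂² ≤ (1 + δ_{ak}) γ² ‖h_{T0 ∪ T1}‖₂² / a`, so the RIP condition forces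
`h_{T0 ∪ T1} = 0`, and then the cone bound forces `h = 0`.
-/

open scoped Matrix

section Vectors

variable {ι : Type*} [Fintype ι]

lemma l2norm_eq_norm (v : ι → ℝ) : l2norm v = ‖(WithLp.toLp 2 v : EuclideanSpace ℝ ι)‖ := by
  simp [l2norm, EuclideanSpace.norm_eq]

lemma l2norm_add_le (u v : ι → ℝ) : l2norm (u + v) ≤ l2norm u + l2norm v := by
  simpa only [l2norm_eq_norm, WithLp.toLp_add] using norm_add_le _ _

lemma l2norm_neg (v : ι → ℝ) : l2norm (-v) = l2norm v := by
  simp [l2norm]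

lemma sq_l2norm (v : ι → ℝ) : l2norm v ^ 2 = ∑ i, v i ^ 2 :=
  Real.sq_sqrt (Finset.sum_nonneg fun i _ => sq_nonneg (v i))

variable [DecidableEq ι]

lemma sum_sq_restrict (v : ι → ℝ) (S : Finset ι) :
    ∑ i, restrict v S i ^ 2 = ∑ i ∈ S, v i ^ 2 := by
  simp [restrict, apply_ite (· ^ 2)]

lemma isSparse_restrict (v : ι → ℝ) {S : Finset ι} {m : ℕ} (hS : S.card ≤ m) :
    IsSparse m (restrict v S) := by
  refine (Finset.card_le_card fun i hi => ?_).trans hS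
  by_contra hiS
  simp [restrict, hiS] at hi

end Vectors

lemma restrict_eq_add_restrict_sdiff {ι : Type*} [DecidableEq ι] (v : ι → ℝ) {B S : Finset ι}
    (hBS : B ⊆ S) :
    restrict v S = restrict v B + restrict v (S \ B) := by
  ext i
  by_cases hB : i ∈ B
  · simp [restrict, hB, hBS hB]
  · by_cases hS : i ∈ S <;> simp [restrict, hB, hS]

lemma sum_abs_le_sqrt_card_mul_sqrt {ι : Type*} (v : ι → ℝ) {S : Finset ι} {s : ℝ}
    (hs : ∑ i ∈ S, v i ^ 2 ≤ s) : ∑ i ∈ S, |v i| ≤ √(S.card : ℝ) * √s := by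
  rw [← Real.sqrt_mul (Nat.cast_nonneg _)]
  refine Real.le_sqrt_of_sq_le ?_
  calc (∑ i ∈ S, |v i|) ^ 2 ≤ S.card * ∑ i ∈ S, |v i| ^ 2 := sq_sum_le_card_mul_sum_sq
    _ ≤ S.card * s := by simp only [sq_abs]; gcongr

lemma sum_le_sum_of_forall_le_of_card_le {ι : Type*} {P Q : Finset ι} {f g : ι → ℝ}
    (hg : ∀ j ∈ Q, 0 ≤ g j) (hfg : ∀ i ∈ P, ∀ j ∈ Q, f i ≤ g j) (hPQ : P.card ≤ Q.card) :
    ∑ i ∈ P, f i ≤ ∑ j ∈ Q, g j := by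
  rcases P.eq_empty_or_nonempty with rfl | hP
  · simpa using Finset.sum_nonneg hg
  obtain ⟨i₀, hi₀, hmax⟩ := Finset.exists_max_image P f hP
  calc ∑ i ∈ P, f i ≤ P.card • max (f i₀) 0 :=
        Finset.sum_le_card_nsmul _ _ _ fun i hi => (hmax i hi).trans (le_max_left _ _)
    _ ≤ Q.card • max (f i₀) 0 := nsmul_le_nsmul_left (le_max_right _ _) hPQ
    _ ≤ ∑ j ∈ Q, g j :=
        Finset.card_nsmul_le_sum _ _ _ fun j hj => max_le (hfg i₀ hi₀ j hj) (hg j hj)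

section TopSubset

variable {ι : Type*} [DecidableEq ι]

structure IsTopSubset (v : ι → ℝ) (m : ℕ) (R B : Finset ι) : Prop where
  subset : B ⊆ R
  card_eq : B.card = min m R.card
  abs_le : ∀ i ∈ R \ B, ∀ j ∈ B, |v i| ≤ |v j|

lemma exists_isTopSubset (v : ι → ℝ) (R : Finset ι) (m : ℕ) : ∃ B, IsTopSubset v m R B := by
  induction m with
  | zero => exact ⟨∅, Finset.empty_subset _, by simp, by simp⟩
  | succ m ih =>
    obtain ⟨B, hB⟩ := ih
    by_cases hBR : B = R
    · subst hBR
      exact ⟨B, hB.subset, by have := hB.card_eq; omega, hB.abs_le⟩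
    have hlt : B.card < R.card := Finset.card_lt_card (hB.subset.ssubset_of_ne hBR)
    obtain ⟨j, hj, hjmax⟩ := Finset.exists_max_image (R \ B) (fun i => |v i|)
      (Finset.sdiff_nonempty.2 fun h => hBR (hB.subset.antisymm h))
    have hjB : j ∉ B := (Finset.mem_sdiff.1 hj).2
    refine ⟨insert j B, Finset.insert_subset (Finset.mem_sdiff.1 hj).1 hB.subset, ?_, ?_⟩
    · rw [Finset.card_insert_of_notMem hjB]
      have := hB.card_eq
      omega
    · intro i hi l hl
      have hiB : i ∈ R \ B := by grind
      rcases Finset.mem_insert.1 hl with rfl | hlB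
      · exact hjmax i hiB
      · exact hB.abs_le i hiB l hlB

lemma IsTopSubset.sum_sq_le {v : ι → ℝ} {m : ℕ} {R B S : Finset ι} (hB : IsTopSubset v m R B)
    (hSR : S ⊆ R) (hS : S.card ≤ m) : ∑ i ∈ S, v i ^ 2 ≤ ∑ i ∈ B, v i ^ 2 := by
  have hSB : S.card ≤ B.card := hB.card_eq ▸ le_min hS (Finset.card_le_card hSR)
  have hdiff : ∑ i ∈ S \ B, v i ^ 2 ≤ ∑ i ∈ B \ S, v i ^ 2 := by
    refine sum_le_sum_of_forall_le_of_card_le (fun j _ => sq_nonneg _) (fun i hi j hj => ?_)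
      (Finset.card_sdiff_le_card_sdiff_iff.2 hSB)
    rw [← sq_abs (v i), ← sq_abs (v j)]
    exact pow_le_pow_left₀ (abs_nonneg _)
      (hB.abs_le i (by grind) j (Finset.mem_sdiff.1 hj).1) 2
  rw [← Finset.sum_inter_add_sum_sdiff S B, ← Finset.sum_inter_add_sum_sdiff B S,
    Finset.inter_comm]
  linarith

end TopSubset

lemma sqrt_sum_sq_le_sum_abs_div_sqrt_card {ι : Type*} (v : ι → ℝ) {B C : Finset ι}
    (hCB : C.card ≤ B.card) (hdom : ∀ i ∈ C, ∀ j ∈ B, |v i| ≤ |v j|) :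
    √(∑ i ∈ C, v i ^ 2) ≤ (∑ j ∈ B, |v j|) / √(B.card : ℝ) := by
  rcases C.eq_empty_or_nonempty with rfl | ⟨i₀, hi₀⟩
  · simp only [Finset.sum_empty, Real.sqrt_zero]
    positivity
  set t := ∑ j ∈ B, |v j|
  have hB : (0 : ℝ) < B.card := by
    exact_mod_cast (Finset.card_pos.2 ⟨i₀, hi₀⟩).trans_le hCB
  have hentry : ∀ i ∈ C, v i ^ 2 ≤ (t / B.card) ^ 2 := fun i hi => by
    rw [← sq_abs]
    refine pow_le_pow_left₀ (abs_nonneg _) ((le_div_iff₀ hB).2 ?_) 2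
    simpa [mul_comm] using Finset.card_nsmul_le_sum B (fun j => |v j|) _ (hdom i hi)
  have hsum : ∑ i ∈ C, v i ^ 2 ≤ t ^ 2 / B.card := calc
    ∑ i ∈ C, v i ^ 2 ≤ C.card • (t / B.card) ^ 2 := Finset.sum_le_card_nsmul _ _ _ hentry
    _ ≤ B.card * (t / B.card) ^ 2 := by rw [nsmul_eq_mul]; gcongr
    _ = t ^ 2 / B.card := by field_simp
  calc √(∑ i ∈ C, v i ^ 2) ≤ √(t ^ 2 / B.card) := Real.sqrt_le_sqrt hsum
    _ = t / √(B.card : ℝ) := by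
      rw [Real.sqrt_div' _ hB.le, Real.sqrt_sq (Finset.sum_nonneg fun j _ => abs_nonneg _)]

lemma sum_sq_mulVec_le {m n : ℕ} (A : Matrix (Fin n) (Fin m) ℝ) (u : Fin m → ℝ) :
    ∑ j, (A *ᵥ u) j ^ 2 ≤ (∑ j, ∑ i, A j i ^ 2) * ∑ i, u i ^ 2 := by
  rw [Finset.sum_mul]
  exact Finset.sum_le_sum fun j _ => by
    simpa [Matrix.mulVec, dotProduct] using Finset.sum_mul_sq_le_sq_mul_sq Finset.univ (A j) u

section RestrictedIsometry

variable {n N : ℕ} (A : Matrix (Fin n) (Fin N) ℝ)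

lemma ripConst_spec (m : ℕ) :
    0 ≤ ripConst A m ∧ ∀ u : Fin N → ℝ, IsSparse m u →
      (1 - ripConst A m) * ∑ i, u i ^ 2 ≤ ∑ j, (A *ᵥ u) j ^ 2 ∧
      ∑ j, (A *ᵥ u) j ^ 2 ≤ (1 + ripConst A m) * ∑ i, u i ^ 2 := by
  set S := {δ : ℝ | 0 ≤ δ ∧ ∀ u : Fin N → ℝ, IsSparse m u →
    (1 - δ) * ∑ i, u i ^ 2 ≤ ∑ j, (A *ᵥ u) j ^ 2 ∧ ∑ j, (A *ᵥ u) j ^ 2 ≤ (1 + δ) * ∑ i, u i ^ 2}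
  have hne : S.Nonempty := by
    refine ⟨1 + ∑ j, ∑ i, A j i ^ 2, by positivity, fun u _ => ⟨?_, ?_⟩⟩
    · have : (1 - (1 + ∑ j, ∑ i, A j i ^ 2)) * ∑ i, u i ^ 2 ≤ 0 :=
        mul_nonpos_of_nonpos_of_nonneg (by simp; positivity) (by positivity)
      exact this.trans (by positivity)
    · exact (sum_sq_mulVec_le A u).trans
        (mul_le_mul_of_nonneg_right (by linarith) (by positivity))
  have hclosed : IsClosed S := by
    have hS : S = Set.Ici 0 ∩ ⋂ (u : Fin N → ℝ) (_ : IsSparse m u),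
        {δ : ℝ | (1 - δ) * (∑ i, u i ^ 2) ≤ ∑ j, (A *ᵥ u) j ^ 2} ∩
          {δ : ℝ | ∑ j, (A *ᵥ u) j ^ 2 ≤ (1 + δ) * ∑ i, u i ^ 2} := by
      ext δ
      simp [S, Set.mem_iInter, forall_and]
    rw [hS]
    exact isClosed_Ici.inter <| isClosed_iInter fun u => isClosed_iInter fun _ =>
      (isClosed_le (by fun_prop) continuous_const).inter
        (isClosed_le continuous_const (by fun_prop))
  exact hclosed.csInf_mem hne ⟨0, fun δ hδ => hδ.1⟩

lemma l2norm_mulVec_le {m : ℕ} {u : Fin N → ℝ} (hu : IsSparse m u) :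
    l2norm (A *ᵥ u) ≤ √(1 + ripConst A m) * l2norm u := by
  rw [l2norm, l2norm, ← Real.sqrt_mul (by linarith [(ripConst_spec A m).1])]
  exact Real.sqrt_le_sqrt ((ripConst_spec A m).2 u hu).2

/-- The shelling argument: cut `R \ B` into successive top blocks of size `m`; each block is
dominated entrywise by the average of the previous one. -/
lemma l2norm_mulVec_restrict_sdiff_le {m : ℕ} (hm : 1 ≤ m) (v : Fin N → ℝ)
    (R B : Finset (Fin N)) (hB : IsTopSubset v m R B) :
    l2norm (A *ᵥ restrict v (R \ B)) ≤ √(1 + ripConst A m) * ((∑ i ∈ R, |v i|) / √(m : ℝ)) := by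
  induction R using Finset.strongInduction generalizing B with
  | H R ih =>
  by_cases hRm : R.card ≤ m
  · have hBR : B = R := Finset.eq_of_subset_of_card_le hB.subset (by rw [hB.card_eq]; omega)
    have hzero : restrict v (R \ B) = 0 := by ext i; simp [restrict, hBR]
    rw [hzero, Matrix.mulVec_zero, l2norm, Finset.sum_eq_zero (by simp), Real.sqrt_zero]
    positivity
  have hBm : B.card = m := by rw [hB.card_eq]; omega
  obtain ⟨B', hB'⟩ := exists_isTopSubset v (R \ B) m
  have hB'card : B'.card ≤ B.card := by rw [hB'.card_eq, hBm]; exact min_le_left _ _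
  have hfirst : l2norm (A *ᵥ restrict v B')
      ≤ √(1 + ripConst A m) * ((∑ i ∈ B, |v i|) / √(m : ℝ)) := by
    refine (l2norm_mulVec_le A (isSparse_restrict v (hBm ▸ hB'card))).trans ?_
    gcongr
    rw [l2norm, sum_sq_restrict, ← hBm]
    exact sqrt_sum_sq_le_sum_abs_div_sqrt_card v hB'card
      fun i hi j hj => hB.abs_le i (hB'.subset hi) j hj
  have hrest := ih (R \ B) (Finset.sdiff_ssubset hB.subset (Finset.card_pos.1 (by omega))) B' hB'
  calc l2norm (A *ᵥ restrict v (R \ B))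
      ≤ l2norm (A *ᵥ restrict v B') + l2norm (A *ᵥ restrict v ((R \ B) \ B')) := by
        rw [restrict_eq_add_restrict_sdiff v hB'.subset, Matrix.mulVec_add]
        exact l2norm_add_le _ _
    _ ≤ √(1 + ripConst A m) * ((∑ i ∈ B, |v i|) / √(m : ℝ))
        + √(1 + ripConst A m) * ((∑ i ∈ R \ B, |v i|) / √(m : ℝ)) := add_le_add hfirst hrest
    _ = √(1 + ripConst A m) * ((∑ i ∈ R, |v i|) / √(m : ℝ)) := by
      rw [← mul_add, ← add_div, add_comm (∑ i ∈ B, _), Finset.sum_sdiff hB.subset]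

lemma sum_sq_le_of_mulVec_eq_zero {h : Fin N → ℝ} (hAh : A *ᵥ h = 0) {k m : ℕ} (hm : 1 ≤ m)
    {T₀ T₁ : Finset (Fin N)} (hT₀ : T₀.card ≤ k) (hT₁ : IsTopSubset h m T₀ᶜ T₁) :
    (1 - ripConst A (m + k)) * ∑ i ∈ T₀ ∪ T₁, h i ^ 2
      ≤ (1 + ripConst A m) * (∑ i ∈ T₀ᶜ, |h i|) ^ 2 / m := by
  have hsplit : h = restrict h (T₀ ∪ T₁) + restrict h (T₀ᶜ \ T₁) := by
    ext i; by_cases h0 : i ∈ T₀ <;> by_cases h1 : i ∈ T₁ <;> simp [restrict, h0, h1]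
  have hA : A *ᵥ restrict h (T₀ ∪ T₁) = -(A *ᵥ restrict h (T₀ᶜ \ T₁)) := by
    rw [eq_neg_iff_add_eq_zero, ← Matrix.mulVec_add, ← hsplit, hAh]
  have hsparse : IsSparse (m + k) (restrict h (T₀ ∪ T₁)) := isSparse_restrict h <| by
    have := Finset.card_union_le T₀ T₁
    have := hT₁.card_eq
    omega
  have hlow := ((ripConst_spec A (m + k)).2 _ hsparse).1
  rw [sum_sq_restrict, ← sq_l2norm, hA, l2norm_neg] at hlow
  refine hlow.trans ?_
  have hm' : (0 : ℝ) < m := by exact_mod_cast hm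
  calc l2norm (A *ᵥ restrict h (T₀ᶜ \ T₁)) ^ 2
      ≤ (√(1 + ripConst A m) * ((∑ i ∈ T₀ᶜ, |h i|) / √(m : ℝ))) ^ 2 := by
        gcongr
        · exact Real.sqrt_nonneg _
        · exact l2norm_mulVec_restrict_sdiff_le A hm h T₀ᶜ T₁ hT₁
    _ = (1 + ripConst A m) * (∑ i ∈ T₀ᶜ, |h i|) ^ 2 / m := by
      rw [mul_pow, div_pow, Real.sq_sqrt (by linarith [(ripConst_spec A m).1]),
        Real.sq_sqrt hm'.le, mul_div_assoc]

lemma sum_sq_eq_zero_of_mulVec_eq_zero {h : Fin N → ℝ} (hAh : A *ᵥ h = 0) {k m : ℕ} (hm : 1 ≤ m)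
    {T₀ T₁ : Finset (Fin N)} (hT₀ : T₀.card ≤ k) (hT₁ : IsTopSubset h m T₀ᶜ T₁) {β : ℝ}
    (hcone : ∑ i ∈ T₀ᶜ, |h i| ≤ β * √(∑ i ∈ T₀ ∪ T₁, h i ^ 2))
    (hβ : (1 + ripConst A m) * β ^ 2 < (1 - ripConst A (m + k)) * m) :
    ∑ i ∈ T₀ ∪ T₁, h i ^ 2 = 0 := by
  set s := ∑ i ∈ T₀ ∪ T₁, h i ^ 2
  have hs : 0 ≤ s := Finset.sum_nonneg fun i _ => sq_nonneg _
  have hm' : (0 : ℝ) < m := by exact_mod_cast hm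
  have hsq : (∑ i ∈ T₀ᶜ, |h i|) ^ 2 ≤ β ^ 2 * s := by
    rw [← Real.sq_sqrt hs, ← mul_pow]
    exact pow_le_pow_left₀ (Finset.sum_nonneg fun i _ => abs_nonneg _) hcone 2
  have hrip := (sum_sq_le_of_mulVec_eq_zero A hAh hm hT₀ hT₁).trans
    (div_le_div_of_nonneg_right (mul_le_mul_of_nonneg_left hsq
      (by linarith [(ripConst_spec A m).1])) hm'.le)
  rw [le_div_iff₀ hm'] at hrip
  nlinarith

end RestrictedIsometry

section Cone

open scoped symmDiff

variable {ι : Type*} [Fintype ι] [DecidableEq ι]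

lemma sum_compl_mul_abs_sub_le {w x xs : ι → ℝ} {T : Finset ι} (hw : ∀ i, 0 ≤ w i)
    (hx : ∀ i, x i ≠ 0 → i ∈ T) (hopt : wl1norm w xs ≤ wl1norm w x) :
    ∑ i ∈ Tᶜ, w i * |xs i - x i| ≤ ∑ i ∈ T, w i * |xs i - x i| := by
  have hxT : ∀ i ∈ Tᶜ, x i = 0 := fun i hi => by
    by_contra hne
    exact Finset.mem_compl.1 hi (hx i hne)
  have hoff : ∑ i ∈ Tᶜ, w i * |xs i - x i| = ∑ i ∈ Tᶜ, w i * |xs i| :=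
    Finset.sum_congr rfl fun i hi => by rw [hxT i hi, sub_zero]
  have hx0 : ∑ i ∈ Tᶜ, w i * |x i| = 0 :=
    Finset.sum_eq_zero fun i hi => by rw [hxT i hi, abs_zero, mul_zero]
  have hon : ∑ i ∈ T, (w i * |x i| - w i * |xs i|) ≤ ∑ i ∈ T, w i * |xs i - x i| :=
    Finset.sum_le_sum fun i _ => by
      rw [← mul_sub, abs_sub_comm]
      exact mul_le_mul_of_nonneg_left (abs_sub_abs_le_abs_sub _ _) (hw i)
  rw [wl1norm, wl1norm, ← Finset.sum_add_sum_compl T,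
    ← Finset.sum_add_sum_compl T (fun i => w i * |x i|), hx0] at hopt
  rw [Finset.sum_sub_distrib] at hon
  linarith

lemma sum_abs_compl_le_of_weights {w h : ι → ℝ} {ω : ℝ} {T Tt : Finset ι}
    (hw : ∀ i, w i = if i ∈ Tt then ω else 1)
    (hcone : ∑ i ∈ Tᶜ, w i * |h i| ≤ ∑ i ∈ T, w i * |h i|) :
    ∑ i ∈ Tᶜ, |h i| ≤ ω * ∑ i ∈ T, |h i| + (1 - ω) * ∑ i ∈ Tt ∆ T, |h i| := by
  have hdefect : ∀ S : Finset ι,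
      ∑ i ∈ S, |h i| = ∑ i ∈ S, w i * |h i| + (1 - ω) * ∑ i ∈ S ∩ Tt, |h i| := fun S => by
    rw [← Finset.sum_ite_mem, Finset.mul_sum, ← Finset.sum_add_distrib]
    refine Finset.sum_congr rfl fun i _ => ?_
    rw [hw i]
    split_ifs <;> ring
  have hcompl : Tᶜ ∩ Tt = Tt \ T := by ext i; simp [and_comm]
  have hsplit := Finset.sum_inter_add_sum_sdiff T Tt (fun i => |h i|)
  have hT := hdefect T
  rw [hdefect Tᶜ, hcompl, Finset.symmDiff_def, Finset.sum_union disjoint_sdiff_sdiff, ← hsplit]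
  rw [← hsplit] at hT
  linarith

lemma sum_abs_compl_le_of_support_estimate {h : ι → ℝ} {T₀ Tt T₁ : Finset ι} {k m : ℕ}
    {ρ α ω : ℝ} (hT₀ : T₀.card = k) (hTt : (Tt.card : ℝ) = ρ * k)
    (hTtT₀ : ((Tt ∩ T₀).card : ℝ) = α * ρ * k) (hm : (1 - α) * ρ * k ≤ m)
    (hω₀ : 0 ≤ ω) (hω₁ : ω ≤ 1) (hT₁ : IsTopSubset h m T₀ᶜ T₁)
    (hcone : ∑ i ∈ T₀ᶜ, |h i| ≤ ω * ∑ i ∈ T₀, |h i| + (1 - ω) * ∑ i ∈ Tt ∆ T₀, |h i|) :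
    ∑ i ∈ T₀ᶜ, |h i|
      ≤ (ω + (1 - ω) * √(1 + ρ - 2 * α * ρ)) * √(k : ℝ) * √(∑ i ∈ T₀ ∪ T₁, h i ^ 2) := by
  set s := ∑ i ∈ T₀ ∪ T₁, h i ^ 2
  have hs : s = ∑ i ∈ T₀, h i ^ 2 + ∑ i ∈ T₁, h i ^ 2 :=
    Finset.sum_union (Finset.disjoint_of_subset_right hT₁.subset disjoint_compl_right)
  have hcard₁ : ((Tt \ T₀).card : ℝ) + (Tt ∩ T₀).card = Tt.card := by
    exact_mod_cast Finset.card_sdiff_add_card_inter Tt T₀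
  have hcard₂ : ((T₀ \ Tt).card : ℝ) + (Tt ∩ T₀).card = T₀.card := by
    rw [Finset.inter_comm]; exact_mod_cast Finset.card_sdiff_add_card_inter T₀ Tt
  have hΔcard : ((Tt ∆ T₀).card : ℝ) = (1 + ρ - 2 * α * ρ) * k := by
    rw [Finset.symmDiff_def, Finset.card_union_of_disjoint disjoint_sdiff_sdiff]
    push_cast
    rw [hT₀] at hcard₂
    linarith
  have hsdiff : (Tt \ T₀).card ≤ m := by
    have : ((Tt \ T₀).card : ℝ) ≤ m := by linarith
    exact_mod_cast this
  have hΔsq : ∑ i ∈ Tt ∆ T₀, h i ^ 2 ≤ s := by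
    have h₁ := hT₁.sum_sq_le (fun i hi => Finset.mem_compl.2 (Finset.mem_sdiff.1 hi).2) hsdiff
    have h₀ : ∑ i ∈ T₀ \ Tt, h i ^ 2 ≤ ∑ i ∈ T₀, h i ^ 2 :=
      Finset.sum_le_sum_of_subset_of_nonneg Finset.sdiff_subset fun i _ _ => sq_nonneg _
    rw [Finset.symmDiff_def, Finset.sum_union disjoint_sdiff_sdiff]
    linarith
  have hT₀sum : ∑ i ∈ T₀, |h i| ≤ √(k : ℝ) * √s := by
    rw [← hT₀]
    exact sum_abs_le_sqrt_card_mul_sqrt h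
      (by rw [hs]; linarith [Finset.sum_nonneg fun i (_ : i ∈ T₁) => sq_nonneg (h i)])
  have hΔsum : ∑ i ∈ Tt ∆ T₀, |h i| ≤ √(1 + ρ - 2 * α * ρ) * √(k : ℝ) * √s := by
    have := sum_abs_le_sqrt_card_mul_sqrt h hΔsq
    rwa [hΔcard, Real.sqrt_mul' _ (Nat.cast_nonneg k)] at this
  calc ∑ i ∈ T₀ᶜ, |h i| ≤ ω * ∑ i ∈ T₀, |h i| + (1 - ω) * ∑ i ∈ Tt ∆ T₀, |h i| := hcone
    _ ≤ ω * (√(k : ℝ) * √s) + (1 - ω) * (√(1 + ρ - 2 * α * ρ) * √(k : ℝ) * √s) := by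
      gcongr
    _ = (ω + (1 - ω) * √(1 + ρ - 2 * α * ρ)) * √(k : ℝ) * √s := by ring

lemma eq_zero_of_sum_sq_eq_zero_of_sum_abs_compl_le {h : ι → ℝ} {T₀ T₁ : Finset ι} {β : ℝ}
    (hs : ∑ i ∈ T₀ ∪ T₁, h i ^ 2 = 0)
    (hcone : ∑ i ∈ T₀ᶜ, |h i| ≤ β * √(∑ i ∈ T₀ ∪ T₁, h i ^ 2)) : h = 0 := by
  funext i
  by_cases hi : i ∈ T₀
  · exact pow_eq_zero_iff two_ne_zero |>.1 <|
      (Finset.sum_eq_zero_iff_of_nonneg fun j _ => sq_nonneg (h j)).1 hs i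
        (Finset.mem_union_left _ hi)
  · rw [hs, Real.sqrt_zero, mul_zero] at hcone
    exact abs_eq_zero.1 <| (Finset.sum_eq_zero_iff_of_nonneg fun j _ => abs_nonneg (h j)).1
      (hcone.antisymm (Finset.sum_nonneg fun j _ => abs_nonneg _)) i (Finset.mem_compl.2 hi)

end Cone

/-- exact recovery of a `k`-sparse signal from noise-free measurements via
weighted ℓ1 minimization with partial support information. -/
theorem weighted_l1_exact_recovery
    {n N : ℕ} (A : Matrix (Fin n) (Fin N) ℝ)
    (x : Fin N → ℝ)
    (k ak : ℕ) (a ρ α ω γ : ℝ)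
    (T0 Tt : Finset (Fin N)) (w : Fin N → ℝ)
    (hk : 1 ≤ k)
    -- `x` is `k`-sparse with support `T0`, `|T0| = k`
    (hT0card : T0.card = k)
    (hsupp : ∀ i, x i ≠ 0 → i ∈ T0)
    -- the support estimate `Tt` has `|Tt| = ρk` and `|Tt ∩ T0| = αρk`
    (hTtcard : (Tt.card : ℝ) = ρ * k)
    (hTtT0card : ((Tt ∩ T0).card : ℝ) = α * ρ * k)
    -- `a` is a real number with `ak` an integer, `a ≥ (1-α)ρ`, `a > 1`
    (hak : (ak : ℝ) = a * k)
    (ha : 1 < a)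
    (haαρ : (1 - α) * ρ ≤ a)
    -- the weight `ω ∈ [0,1]` and `γ = ω + (1-ω)√(1+ρ-2αρ)`
    (hω0 : 0 ≤ ω) (hω1 : ω ≤ 1)
    (hγ : γ = ω + (1 - ω) * Real.sqrt (1 + ρ - 2 * α * ρ))
    -- RIP condition: `δ_{ak} + (a/γ²) δ_{(a+1)k} < a/γ² - 1`
    (hRIP : ripConst A ak + (a / γ ^ 2) * ripConst A (ak + k) < a / γ ^ 2 - 1)
    -- the weights: `ω` on `Tt`, `1` on `Ttᶜ`
    (hw : ∀ i, w i = if i ∈ Tt then ω else 1)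
    -- `xs` is any solution of the noise-free weighted ℓ1 problem
    (xs : Fin N → ℝ)
    (hfeas : A.mulVec xs = A.mulVec x)
    (hopt : wl1norm w xs ≤ wl1norm w x) :
    xs = x := by
  set h := xs - x with hh
  have hAh : A *ᵥ h = 0 := by rw [hh, Matrix.mulVec_sub, hfeas, sub_self]
  have hk₀ : (0 : ℝ) < k := by exact_mod_cast hk
  have hak₁ : 1 ≤ ak := by exact_mod_cast (show (0 : ℝ) < ak by rw [hak]; exact mul_pos (by linarith) hk₀)
  have hγ₀ : γ ≠ 0 := by
    rintro rfl
    simp at hRIP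
    linarith [(ripConst_spec A ak).1]
  have hβ : (1 + ripConst A ak) * (γ * √(k : ℝ)) ^ 2 < (1 - ripConst A (ak + k)) * ak := by
    have hc : a / γ ^ 2 * γ ^ 2 = a := div_mul_cancel₀ a (pow_ne_zero 2 hγ₀)
    have := mul_lt_mul_of_pos_right hRIP (by positivity : 0 < γ ^ 2 * k)
    rw [mul_pow, Real.sq_sqrt hk₀.le, hak]
    linear_combination this + (1 - ripConst A (ak + k)) * k * hc
  have hw₀ : ∀ i, 0 ≤ w i := fun i => by rw [hw i]; split_ifs <;> linarith
  obtain ⟨T₁, hT₁⟩ := exists_isTopSubset h T0ᶜ ak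
  have hcone : ∑ i ∈ T0ᶜ, |h i| ≤ γ * √(k : ℝ) * √(∑ i ∈ T0 ∪ T₁, h i ^ 2) :=
    hγ ▸ sum_abs_compl_le_of_support_estimate hT0card hTtcard hTtT0card
      (by rw [hak]; exact mul_le_mul_of_nonneg_right haαρ hk₀.le) hω0 hω1 hT₁
      (sum_abs_compl_le_of_weights hw (sum_compl_mul_abs_sub_le hw₀ hsupp hopt))
  have hs := sum_sq_eq_zero_of_mulVec_eq_zero A hAh hak₁ hT0card.le hT₁ hcone hβ
  exact sub_eq_zero.1 (eq_zero_of_sum_sq_eq_zero_of_sum_abs_compl_le hs hcone)
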